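/- Let 1/2 ≤ λ ≤ 1. For all σ₀, σ₀' ∈ L₀(λ) and σ₁, σ₁' ∈ L₁(λ), the fidelity of the Kronecker (tensor) products satisfies F(σ₀ ⊗ σ₀', σ₁ ⊗ σ₁') ≤ 4λ(1−λ). -/

import Mathlib

open Matrix Kronecker ComplexOrder

noncomputable section

/-- |v⟩⟨v| : the rank-one outer product v v†. -/
def outer {n : Type*} (v : n → ℂ) : Matrix n n ℂ := Matrix.vecMulVec v (star v)

open Classical in
/-- Square root of a positive semidefinite matrix (junk value 0 if not PSD). -/
def psdSqrt {n : Type*} [Fintype n] [DecidableEq n] (A : Matrix n n ℂ) : Matrix n n ℂ :=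
  if h : A.PosSemidef then
    (h.1.eigenvectorUnitary : Matrix n n ℂ) *
      Matrix.diagonal (fun i => ((Real.sqrt (h.1.eigenvalues i) : ℝ) : ℂ)) *
      (star h.1.eigenvectorUnitary : Matrix n n ℂ)
  else 0

/-- |A| = √(A†A). -/
def matAbs {n : Type*} [Fintype n] [DecidableEq n] (A : Matrix n n ℂ) : Matrix n n ℂ :=
  psdSqrt (Aᴴ * A)

/-- Trace distance D(ρ,σ) = (1/2)·tr |σ - ρ|. -/
def trDist {n : Type*} [Fintype n] [DecidableEq n] (ρ σ : Matrix n n ℂ) : ℝ :=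
  (1 / 2) * ((matAbs (σ - ρ)).trace).re

/-- Fidelity F(ρ,σ) = tr √(√ρ · σ · √ρ). -/
def fid {n : Type*} [Fintype n] [DecidableEq n] (ρ σ : Matrix n n ℂ) : ℝ :=
  ((psdSqrt (psdSqrt ρ * σ * psdSqrt ρ)).trace).re

/-- F(ρ, S) : the maximal fidelity of ρ with members of the set S. -/
def fidSet {n : Type*} [Fintype n] [DecidableEq n]
    (ρ : Matrix n n ℂ) (S : Set (Matrix n n ℂ)) : ℝ :=
  sSup (fid ρ '' S)

/-- The states |φᵇ_c(λ)⟩ in ℂ². -/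
def phi (b c : Fin 2) (lam : ℝ) : Fin 2 → ℂ :=
  if b = 0 then
    (if c = 0 then ![(Real.sqrt lam : ℂ), (Real.sqrt (1 - lam) : ℂ)]
     else ![(Real.sqrt (1 - lam) : ℂ), -(Real.sqrt lam : ℂ)])
  else
    (if c = 0 then ![(Real.sqrt lam : ℂ), -(Real.sqrt (1 - lam) : ℂ)]
     else ![(Real.sqrt (1 - lam) : ℂ), (Real.sqrt lam : ℂ)])

/-- The ensemble L_c(λ) = { p|φ⁰_c⟩⟨φ⁰_c| + (1-p)|φ¹_c⟩⟨φ¹_c| : p ∈ [0,1] }. -/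
def Lset (c : Fin 2) (lam : ℝ) : Set (Matrix (Fin 2) (Fin 2) ℂ) :=
  {ρ | ∃ p : ℝ, 0 ≤ p ∧ p ≤ 1 ∧
      ρ = (p : ℂ) • outer (phi 0 c lam) + ((1 - p : ℝ) : ℂ) • outer (phi 1 c lam)}

/-- p_x^y = λ if x = y, 1 - λ otherwise. -/
def pbit (lam : ℝ) (x y : Fin 2) : ℝ := if x = y then lam else 1 - lam

/-- ρ_c = λ|c⟩⟨c| + (1-λ)|1-c⟩⟨1-c|. -/
def rhoC (lam : ℝ) (c : Fin 2) : Matrix (Fin 2) (Fin 2) ℂ :=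
  (lam : ℂ) • outer (Pi.single c 1) + ((1 - lam : ℝ) : ℂ) • outer (Pi.single (1 - c) 1)

/-- Tensor product of two vectors. -/
def vtens {m n : Type*} (v : m → ℂ) (w : n → ℂ) : m × n → ℂ := fun x => v x.1 * w x.2

end

section AuxLemmas
open Matrix Kronecker
open Matrix
open scoped MatrixOrder

noncomputable def Matrix.PosSemidef.sqrt {n : Type*} [Fintype n] [DecidableEq n]
    {A : Matrix n n ℂ} (_hA : A.PosSemidef) : Matrix n n ℂ := CFC.sqrt A

lemma Matrix.PosSemidef.posSemidef_sqrt {n : Type*} [Fintype n] [DecidableEq n]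
    {A : Matrix n n ℂ} (hA : A.PosSemidef) : hA.sqrt.PosSemidef :=
  (CFC.sqrt_nonneg A).posSemidef

lemma Matrix.PosSemidef.sqrt_mul_self {n : Type*} [Fintype n] [DecidableEq n]
    {A : Matrix n n ℂ} (hA : A.PosSemidef) : hA.sqrt * hA.sqrt = A :=
  CFC.sqrt_mul_sqrt_self A hA.nonneg

lemma Matrix.PosSemidef.eq_sqrt_of_sq_eq {n : Type*} [Fintype n] [DecidableEq n]
    {B : Matrix n n ℂ} (hB : B.PosSemidef) {A : Matrix n n ℂ} (hA : A.PosSemidef)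
    (h : B ^ 2 = A) : B = hA.sqrt :=
  (CFC.sqrt_unique (by rw [← sq]; exact h) hB.nonneg).symm

lemma smul_psd {n : Type*} [Fintype n] {A : Matrix n n ℂ} (hA : A.PosSemidef)
    {c : ℝ} (hc : 0 ≤ c) : ((c : ℂ) • A).PosSemidef := by
  constructor
  · show ((c:ℂ) • A)ᴴ = _
    rw [conjTranspose_smul, hA.1.eq]
    congr 1
    simp [Complex.star_def, Complex.conj_ofReal]
  · intro x
    exact (hA.smul (Complex.zero_le_real.mpr hc)).2 x

lemma outer_psd {n : Type*} [Fintype n] (v : n → ℂ) : (outer v).PosSemidef := by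
  have h : outer v = (Matrix.replicateRow Unit (star v))ᴴ * Matrix.replicateRow Unit (star v) := by
    rw [outer, Matrix.vecMulVec_eq Unit, Matrix.conjTranspose_replicateRow, star_star]
  rw [h]
  exact Matrix.posSemidef_conjTranspose_mul_self _

lemma kron_psd {m n : Type*} [Fintype m] [Fintype n] [DecidableEq m] [DecidableEq n]
    {A : Matrix m m ℂ} {B : Matrix n n ℂ} (hA : A.PosSemidef) (hB : B.PosSemidef) :
    (A ⊗ₖ B).PosSemidef := by
  exact hA.kronecker hB

lemma psdSqrt_of_psd {n : Type*} [Fintype n] [DecidableEq n] {A : Matrix n n ℂ}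
    (hA : A.PosSemidef) : psdSqrt A = hA.sqrt := by
  rw [psdSqrt, dif_pos hA, Matrix.PosSemidef.sqrt, CFC.sqrt_eq_real_sqrt A hA.nonneg,
    cfcₙ_eq_cfc, hA.1.cfc_eq, IsHermitian.cfc, Unitary.conjStarAlgAut_apply]
  rfl

lemma psdSqrt_kron {m n : Type*} [Fintype m] [Fintype n] [DecidableEq m] [DecidableEq n]
    {A : Matrix m m ℂ} {B : Matrix n n ℂ} (hA : A.PosSemidef) (hB : B.PosSemidef) :
    psdSqrt (A ⊗ₖ B) = psdSqrt A ⊗ₖ psdSqrt B := by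
  rw [psdSqrt_of_psd (kron_psd hA hB), psdSqrt_of_psd hA, psdSqrt_of_psd hB]
  refine ((kron_psd hA.posSemidef_sqrt hB.posSemidef_sqrt).eq_sqrt_of_sq_eq _ ?_).symm
  rw [pow_two, ← Matrix.mul_kronecker_mul, hA.sqrt_mul_self, hB.sqrt_mul_self]

open Matrix

lemma psd_det_real {M : Matrix (Fin 2) (Fin 2) ℂ} (hM : M.PosSemidef) :
    M.det = (M.det.re : ℂ) ∧ 0 ≤ M.det.re := by
  have h2 : M.det = ((∏ i, hM.1.eigenvalues i : ℝ) : ℂ) := by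
    rw [hM.1.det_eq_prod_eigenvalues]; push_cast; rfl
  rw [h2, Complex.ofReal_re]
  exact ⟨rfl, Finset.prod_nonneg fun i _ => hM.eigenvalues_nonneg i⟩

lemma psd_diag {M : Matrix (Fin 2) (Fin 2) ℂ} (hM : M.PosSemidef) (i : Fin 2) :
    M i i = ((M i i).re : ℂ) ∧ 0 ≤ (M i i).re := by
  have h := hM.dotProduct_mulVec_nonneg (Pi.single i 1)
  have he : star (Pi.single i 1) ⬝ᵥ M *ᵥ Pi.single i 1 = M i i := by
    fin_cases i <;>
      simp [dotProduct, Matrix.mulVec, Fin.sum_univ_two, Pi.single_apply]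
  rw [he] at h
  rw [Complex.le_def] at h
  simp only [Complex.zero_re, Complex.zero_im] at h
  exact ⟨by rw [Complex.ext_iff]; simp [h.2.symm], h.1⟩

lemma psd_trace_real {M : Matrix (Fin 2) (Fin 2) ℂ} (hM : M.PosSemidef) :
    M.trace = (M.trace.re : ℂ) ∧ 0 ≤ M.trace.re := by
  rw [Matrix.trace_fin_two]
  obtain ⟨h0, h0n⟩ := psd_diag hM 0
  obtain ⟨h1, h1n⟩ := psd_diag hM 1
  rw [h0, h1]
  constructor
  · simp
  · simp only [Complex.add_re, Complex.ofReal_re]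
    linarith

lemma psd_trace_zero {M : Matrix (Fin 2) (Fin 2) ℂ} (hM : M.PosSemidef)
    (h : M.trace.re = 0) : M = 0 := by
  obtain ⟨h0, h0n⟩ := psd_diag hM 0
  obtain ⟨h1, h1n⟩ := psd_diag hM 1
  have htr : (M 0 0).re + (M 1 1).re = 0 := by
    have := congrArg Complex.re (Matrix.trace_fin_two M)
    simp only [Complex.add_re] at this
    rw [h] at this
    linarith [this.symm.le, this.symm.ge]
  have h00 : M 0 0 = 0 := by rw [h0]; norm_num; linarith
  have h11 : M 1 1 = 0 := by rw [h1]; norm_num; linarith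
  have h10 : M 1 0 = (starRingEnd ℂ) (M 0 1) := by
    have := hM.1.apply 1 0
    rw [← this]; rfl
  have hoff : M 0 1 = 0 := by
    have h2 := hM.dotProduct_mulVec_nonneg ![(1 : ℂ), -((starRingEnd ℂ) (M 0 1))]
    simp only [dotProduct, Matrix.mulVec, Fin.sum_univ_two] at h2
    simp [h00, h11, h10] at h2
    rw [Complex.le_def] at h2
    have hre := h2.1
    simp [Complex.mul_conj] at hre
    have : Complex.normSq (M 0 1) = 0 := by
      nlinarith [Complex.normSq_nonneg (M 0 1)]
    exact Complex.normSq_eq_zero.mp this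
  ext i j
  fin_cases i <;> fin_cases j <;>
    simp [h00, h11, hoff, h10]

lemma mul_self_fin_two (M : Matrix (Fin 2) (Fin 2) ℂ) :
    M * M = M.trace • M - M.det • (1 : Matrix (Fin 2) (Fin 2) ℂ) := by
  ext i j
  fin_cases i <;> fin_cases j <;>
    simp [Matrix.mul_apply, Fin.sum_univ_two, Matrix.trace_fin_two, Matrix.det_fin_two,
      Matrix.one_apply, Matrix.sub_apply, smul_eq_mul] <;> ring

open Matrix

lemma trace_psdSqrt {M : Matrix (Fin 2) (Fin 2) ℂ} (hM : M.PosSemidef) :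
    (psdSqrt M).trace = ((Real.sqrt (M.trace.re + 2 * Real.sqrt M.det.re) : ℝ) : ℂ) := by
  obtain ⟨hdr, hdn⟩ := psd_det_real hM
  obtain ⟨htr, htn⟩ := psd_trace_real hM
  set T := M.trace.re with hT
  set d := Real.sqrt M.det.re with hd
  have hd0 : 0 ≤ d := Real.sqrt_nonneg _
  have hd2 : d ^ 2 = M.det.re := Real.sq_sqrt hdn
  by_cases ht : T + 2 * d = 0
  · have hT0 : T = 0 := by linarith
    have hM0 : M = 0 := psd_trace_zero hM hT0
    subst hM0
    have hz : psdSqrt (0 : Matrix (Fin 2) (Fin 2) ℂ) = 0 := by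
      rw [psdSqrt_of_psd Matrix.PosSemidef.zero]
      exact (Matrix.PosSemidef.zero.eq_sqrt_of_sq_eq _ (by simp)).symm
    rw [hz, Matrix.trace_zero, ht, Real.sqrt_zero]
    norm_num
  · have htpos : 0 < T + 2 * d := lt_of_le_of_ne (by positivity) (Ne.symm ht)
    set t := Real.sqrt (T + 2 * d) with htdef
    have ht0 : 0 < t := Real.sqrt_pos.mpr htpos
    have ht2 : t ^ 2 = T + 2 * d := Real.sq_sqrt htpos.le
    set S : Matrix (Fin 2) (Fin 2) ℂ :=
      ((t⁻¹ : ℝ) : ℂ) • (M + (d : ℂ) • (1 : Matrix (Fin 2) (Fin 2) ℂ)) with hS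
    have hSpsd : S.PosSemidef :=
      smul_psd (hM.add (smul_psd Matrix.PosDef.one.posSemidef hd0)) (inv_nonneg.mpr ht0.le)
    have hdet : M.det = ((d : ℂ)) ^ 2 := by
      rw [hdr, ← hd2]; push_cast; ring
    have expand : (M + (d : ℂ) • 1) * (M + (d : ℂ) • 1) = (((T + 2 * d : ℝ)) : ℂ) • M := by
      simp only [Matrix.add_mul, Matrix.mul_add, Matrix.smul_mul, Matrix.mul_smul,
        one_mul, mul_one, smul_smul]
      rw [mul_self_fin_two M, htr, hdet]
      push_cast
      module
    have hSq : S ^ 2 = M := by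
      rw [pow_two, hS, Matrix.smul_mul, Matrix.mul_smul, smul_smul, expand, smul_smul]
      have hsc : (t⁻¹ * t⁻¹ * (T + 2 * d) : ℝ) = 1 := by
        rw [← ht2]; field_simp
      have hsc' : ((t⁻¹ : ℝ) : ℂ) * ((t⁻¹ : ℝ) : ℂ) * (((T + 2 * d : ℝ)) : ℂ) = 1 := by
        exact_mod_cast hsc
      rw [hsc', one_smul]
    have hSeq : psdSqrt M = S := by
      rw [psdSqrt_of_psd hM]
      exact (hSpsd.eq_sqrt_of_sq_eq hM hSq).symm
    rw [hSeq, hS, Matrix.trace_smul, Matrix.trace_add, Matrix.trace_smul, Matrix.trace_one,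
      htr]
    simp only [smul_eq_mul, Fintype.card_fin, Nat.cast_ofNat]
    have hreal : t⁻¹ * (T + d * 2) = t := by
      field_simp
      nlinarith [ht2]
    rw [← Complex.ofReal_ofNat, ← Complex.ofReal_mul, ← Complex.ofReal_add, ← Complex.ofReal_mul,
      hreal]

open Matrix

lemma mid_psd {n : Type*} [Fintype n] [DecidableEq n] {ρ σ : Matrix n n ℂ}
    (hρ : ρ.PosSemidef) (hσ : σ.PosSemidef) :
    (psdSqrt ρ * σ * psdSqrt ρ).PosSemidef := by
  rw [psdSqrt_of_psd hρ]
  have h := hσ.mul_mul_conjTranspose_same hρ.sqrt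
  rwa [hρ.posSemidef_sqrt.1.eq] at h

lemma mid_trace {ρ σ : Matrix (Fin 2) (Fin 2) ℂ} (hρ : ρ.PosSemidef) :
    (psdSqrt ρ * σ * psdSqrt ρ).trace = (ρ * σ).trace := by
  rw [psdSqrt_of_psd hρ, Matrix.trace_mul_cycle, hρ.sqrt_mul_self]

lemma mid_det {ρ σ : Matrix (Fin 2) (Fin 2) ℂ} (hρ : ρ.PosSemidef) :
    (psdSqrt ρ * σ * psdSqrt ρ).det = ρ.det * σ.det := by
  rw [psdSqrt_of_psd hρ, Matrix.det_mul, Matrix.det_mul]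
  rw [show hρ.sqrt.det * σ.det * hρ.sqrt.det = (hρ.sqrt.det * hρ.sqrt.det) * σ.det by ring,
    ← Matrix.det_mul, hρ.sqrt_mul_self]

/-- value of the 2×2 fidelity as a real sqrt -/
lemma trace_sqrt_mid {ρ σ : Matrix (Fin 2) (Fin 2) ℂ} (hρ : ρ.PosSemidef) (hσ : σ.PosSemidef) :
    (psdSqrt (psdSqrt ρ * σ * psdSqrt ρ)).trace
      = ((Real.sqrt (((ρ * σ).trace).re + 2 * Real.sqrt ((ρ.det * σ.det).re)) : ℝ) : ℂ) := by
  rw [trace_psdSqrt (mid_psd hρ hσ), mid_trace hρ, mid_det hρ]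

open Matrix

lemma Lset_psd {c : Fin 2} {lam : ℝ} {σ : Matrix (Fin 2) (Fin 2) ℂ} (h : σ ∈ Lset c lam) :
    σ.PosSemidef := by
  obtain ⟨p, hp0, hp1, rfl⟩ := h
  exact (smul_psd (outer_psd _) hp0).add (smul_psd (outer_psd _) (by linarith))

lemma Lset0_form {lam : ℝ} (hlam0 : 0 ≤ lam) (hlam1 : lam ≤ 1)
    {σ : Matrix (Fin 2) (Fin 2) ℂ} (h : σ ∈ Lset 0 lam) :
    ∃ a : ℝ, a ^ 2 ≤ 1 ∧
      σ = !![(lam : ℂ), ((a * (Real.sqrt lam * Real.sqrt (1 - lam)) : ℝ) : ℂ);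
             ((a * (Real.sqrt lam * Real.sqrt (1 - lam)) : ℝ) : ℂ), ((1 - lam : ℝ) : ℂ)] := by
  obtain ⟨p, hp0, hp1, rfl⟩ := h
  refine ⟨2 * p - 1, by nlinarith, ?_⟩
  have hx : (Real.sqrt lam : ℂ) * (Real.sqrt lam : ℂ) = (lam : ℂ) := by
    norm_cast
    exact Real.mul_self_sqrt hlam0
  have hy : (Real.sqrt (1 - lam) : ℂ) * (Real.sqrt (1 - lam) : ℂ) = 1 - (lam : ℂ) := by
    norm_cast
    exact Real.mul_self_sqrt (by linarith)
  ext i j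
  fin_cases i <;> fin_cases j <;>
    · simp only [outer, phi, Matrix.add_apply, Matrix.smul_apply, Matrix.vecMulVec_apply]
      simp [outer, phi, Matrix.vecMulVec_apply, Matrix.add_apply, Matrix.smul_apply,
        smul_eq_mul, Complex.conj_ofReal, Pi.star_apply]
      push_cast
      first
        | linear_combination hx
        | linear_combination hy
        | ring

lemma Lset1_form {lam : ℝ} (hlam0 : 0 ≤ lam) (hlam1 : lam ≤ 1)
    {σ : Matrix (Fin 2) (Fin 2) ℂ} (h : σ ∈ Lset 1 lam) :
    ∃ b : ℝ, b ^ 2 ≤ 1 ∧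
      σ = !![((1 - lam : ℝ) : ℂ), ((b * (Real.sqrt lam * Real.sqrt (1 - lam)) : ℝ) : ℂ);
             ((b * (Real.sqrt lam * Real.sqrt (1 - lam)) : ℝ) : ℂ), (lam : ℂ)] := by
  obtain ⟨p, hp0, hp1, rfl⟩ := h
  refine ⟨1 - 2 * p, by nlinarith, ?_⟩
  have hx : (Real.sqrt lam : ℂ) * (Real.sqrt lam : ℂ) = (lam : ℂ) := by
    norm_cast
    exact Real.mul_self_sqrt hlam0
  have hy : (Real.sqrt (1 - lam) : ℂ) * (Real.sqrt (1 - lam) : ℂ) = 1 - (lam : ℂ) := by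
    norm_cast
    exact Real.mul_self_sqrt (by linarith)
  ext i j
  fin_cases i <;> fin_cases j <;>
    · simp only [outer, phi, Matrix.add_apply, Matrix.smul_apply, Matrix.vecMulVec_apply]
      simp [outer, phi, Matrix.vecMulVec_apply, Matrix.add_apply, Matrix.smul_apply,
        smul_eq_mul, Complex.conj_ofReal, Pi.star_apply]
      push_cast
      first
        | linear_combination hx
        | linear_combination hy
        | ring

open Matrix Kronecker

lemma key {lam : ℝ} (h0 : 1 / 2 ≤ lam) (h1 : lam ≤ 1) {σ₀ σ₁ : Matrix (Fin 2) (Fin 2) ℂ}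
    (hs0 : σ₀ ∈ Lset 0 lam) (hs1 : σ₁ ∈ Lset 1 lam) :
    Real.sqrt (((σ₀ * σ₁).trace).re + 2 * Real.sqrt ((σ₀.det * σ₁.det).re))
      ≤ 2 * Real.sqrt (lam * (1 - lam)) := by
  have hlam0 : 0 ≤ lam := by linarith
  obtain ⟨a, ha, rfl⟩ := Lset0_form hlam0 h1 hs0
  obtain ⟨b, hb, rfl⟩ := Lset1_form hlam0 h1 hs1
  set x := Real.sqrt lam with hxdef
  set y := Real.sqrt (1 - lam) with hydef
  set m := lam * (1 - lam) with hmdef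
  have hm : 0 ≤ m := by nlinarith
  have hxy : (x * y) ^ 2 = m := by
    rw [mul_pow, hxdef, hydef, Real.sq_sqrt hlam0, Real.sq_sqrt (by linarith)]
  have htrc : ((!![(lam : ℂ), ((a * (x * y) : ℝ) : ℂ); ((a * (x * y) : ℝ) : ℂ), ((1 - lam : ℝ) : ℂ)] *
      !![((1 - lam : ℝ) : ℂ), ((b * (x * y) : ℝ) : ℂ); ((b * (x * y) : ℝ) : ℂ), (lam : ℂ)]).trace)
      = ((2 * m + 2 * (a * b) * (x * y) ^ 2 : ℝ) : ℂ) := by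
    rw [Matrix.trace_fin_two]
    simp [Matrix.mul_apply, Fin.sum_univ_two, hmdef]
    push_cast
    ring
  have hdet0 : (!![(lam : ℂ), ((a * (x * y) : ℝ) : ℂ); ((a * (x * y) : ℝ) : ℂ), ((1 - lam : ℝ) : ℂ)]).det
      = ((m - a ^ 2 * (x * y) ^ 2 : ℝ) : ℂ) := by
    rw [Matrix.det_fin_two_of]
    push_cast [hmdef]
    ring
  have hdet1 : (!![((1 - lam : ℝ) : ℂ), ((b * (x * y) : ℝ) : ℂ); ((b * (x * y) : ℝ) : ℂ), (lam : ℂ)]).det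
      = ((m - b ^ 2 * (x * y) ^ 2 : ℝ) : ℂ) := by
    rw [Matrix.det_fin_two_of]
    push_cast [hmdef]
    ring
  rw [htrc, hdet0, hdet1, ← Complex.ofReal_mul, Complex.ofReal_re, Complex.ofReal_re, hxy]
  set u := Real.sqrt ((1 - a ^ 2) * (1 - b ^ 2)) with hudef
  have hu0 : 0 ≤ u := Real.sqrt_nonneg _
  have hu2 : u ^ 2 = (1 - a ^ 2) * (1 - b ^ 2) := Real.sq_sqrt (by nlinarith)
  have hD : (m - a ^ 2 * m) * (m - b ^ 2 * m) = (m * u) ^ 2 := by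
    rw [mul_pow, hu2]; ring
  rw [hD, Real.sqrt_sq (mul_nonneg hm hu0)]
  have hab : a * b ≤ 1 := by nlinarith
  have hule : u ≤ 1 - a * b := by
    have h' : (1 - a ^ 2) * (1 - b ^ 2) ≤ (1 - a * b) ^ 2 := by nlinarith [sq_nonneg (a - b)]
    calc u ≤ Real.sqrt ((1 - a * b) ^ 2) := Real.sqrt_le_sqrt h'
      _ = 1 - a * b := Real.sqrt_sq (by linarith)
  have hin : 2 * m + 2 * (a * b) * m + 2 * (m * u) ≤ 4 * m := by
    nlinarith [mul_le_mul_of_nonneg_left hule hm]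
  calc Real.sqrt (2 * m + 2 * (a * b) * m + 2 * (m * u)) ≤ Real.sqrt (4 * m) :=
        Real.sqrt_le_sqrt hin
    _ = 2 * Real.sqrt m := by
        rw [show (4 : ℝ) * m = 2 ^ 2 * m by ring, Real.sqrt_mul (by positivity),
          Real.sqrt_sq (by norm_num)]


end AuxLemmas

open Kronecker in
/-- For 1/2 ≤ λ ≤ 1, all σ₀, σ₀' ∈ L₀(λ) and σ₁, σ₁' ∈ L₁(λ),
F(σ₀ ⊗ σ₀', σ₁ ⊗ σ₁') ≤ 4λ(1-λ). -/
theorem stmt5 (lam : ℝ) (h0 : 1 / 2 ≤ lam) (h1 : lam ≤ 1) :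
    ∀ σ₀ ∈ Lset 0 lam, ∀ σ₀' ∈ Lset 0 lam, ∀ σ₁ ∈ Lset 1 lam, ∀ σ₁' ∈ Lset 1 lam,
      fid (σ₀ ⊗ₖ σ₀') (σ₁ ⊗ₖ σ₁') ≤ 4 * (lam * (1 - lam)) := by

  intro σ₀ h₀ σ₀' h₀' σ₁ h₁ σ₁' h₁'
  have P0 := Lset_psd h₀
  have P0' := Lset_psd h₀'
  have Q1 := Lset_psd h₁
  have Q1' := Lset_psd h₁'
  have hm : 0 ≤ lam * (1 - lam) := by nlinarith
  rw [fid, psdSqrt_kron P0 P0', ← Matrix.mul_kronecker_mul, ← Matrix.mul_kronecker_mul,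
    psdSqrt_kron (mid_psd P0 Q1) (mid_psd P0' Q1'), Matrix.trace_kronecker,
    trace_sqrt_mid P0 Q1, trace_sqrt_mid P0' Q1', ← Complex.ofReal_mul, Complex.ofReal_re]
  have k1 := key h0 h1 h₀ h₁
  have k2 := key h0 h1 h₀' h₁'
  calc Real.sqrt (((σ₀ * σ₁).trace).re + 2 * Real.sqrt ((σ₀.det * σ₁.det).re)) *
        Real.sqrt (((σ₀' * σ₁').trace).re + 2 * Real.sqrt ((σ₀'.det * σ₁'.det).re))
      ≤ (2 * Real.sqrt (lam * (1 - lam))) * (2 * Real.sqrt (lam * (1 - lam))) :=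
        mul_le_mul k1 k2 (Real.sqrt_nonneg _) (by positivity)
    _ = 4 * (lam * (1 - lam)) := by
        rw [show (2 * Real.sqrt (lam * (1 - lam))) * (2 * Real.sqrt (lam * (1 - lam)))
            = 4 * (Real.sqrt (lam * (1 - lam)) * Real.sqrt (lam * (1 - lam))) by ring,
          Real.mul_self_sqrt hm]
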